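/- arXiv:1406.6440 — 2 statements merged into one kernel-verified Lean document; each statement's English description precedes it below -/
import Mathlib

section
/- For every division C of a totally ordered n-element set, the number of type A C-permutations is at most the number of type B C-permutations, which in turn is at most 1^{|C_1|} 2^{|C_2|} ... n^{|C_n|}; each inequality is an equality if and only if C is superdiagonal (|C_1| + ... + |C_i| ≥ i for all i). -/
open scoped Pointwise
open MeasureTheory Nat

namespace MixedEulerian

/-- A division of a finite set `S` into an ordered sequence of blocks,
with all elements of earlier blocks strictly smaller than those of later blocks. -/
def IsDivision (C : List (Finset ℕ)) (S : Finset ℕ) : Prop :=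
  (∀ s ∈ S, ∃ i, i < C.length ∧ s ∈ C.getD i ∅) ∧
  (∀ i, i < C.length → C.getD i ∅ ⊆ S) ∧
  (∀ i j, i < j → j < C.length →
    ∀ s ∈ C.getD i ∅, ∀ t ∈ C.getD j ∅, s < t)

/-- Type A admissibility: `s ∈ C_i` is admissible iff `s = min C₁`, `s = max C_n`,
or `i` is strictly between the first and the last index. (Indices are 0-based.) -/
def AdmissibleA (C : List (Finset ℕ)) (s : ℕ) : Prop :=
  ∃ i, i < C.length ∧ s ∈ C.getD i ∅ ∧
    ((i = 0 ∧ ∀ t ∈ C.getD 0 ∅, s ≤ t) ∨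
     (i = C.length - 1 ∧ ∀ t ∈ C.getD i ∅, t ≤ s) ∨
     (0 < i ∧ i + 1 < C.length))

/-- Type A deletion of `s` from the division `C`. -/
def deleteA (C : List (Finset ℕ)) (s : ℕ) : List (Finset ℕ) :=
  let i := C.findIdx (fun b => decide (s ∈ b))
  let B := C.getD i ∅
  let lo := B.filter (fun t => t < s)
  let hi := B.filter (fun t => s < t)
  if C.length ≤ 1 then []
  else if i = 0 then (hi ∪ C.getD 1 ∅) :: C.drop 2
  else if i = C.length - 1 then C.take (i - 1) ++ [C.getD (i - 1) ∅ ∪ lo]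
  else C.take (i - 1) ++ [C.getD (i - 1) ∅ ∪ lo, hi ∪ C.getD (i + 1) ∅] ++ C.drop (i + 2)

/-- `w` is a (type A) `C`-permutation: each entry is admissible in the division
obtained by deleting the previous entries, and all elements get deleted. -/
def IsCPermA : List (Finset ℕ) → List ℕ → Prop
  | C, [] => ∀ B ∈ C, B = ∅
  | C, s :: w => AdmissibleA C s ∧ IsCPermA (deleteA C s) w

/-- Type B admissibility: `s ∈ C_i` is admissible iff `s = min C₁` or `i ≠ 0`. -/
def AdmissibleB (C : List (Finset ℕ)) (s : ℕ) : Prop :=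
  ∃ i, i < C.length ∧ s ∈ C.getD i ∅ ∧
    ((i = 0 ∧ ∀ t ∈ C.getD 0 ∅, s ≤ t) ∨ i ≠ 0)

/-- Type B deletion of `s` from the division `C`. -/
def deleteB (C : List (Finset ℕ)) (s : ℕ) : List (Finset ℕ) :=
  let i := C.findIdx (fun b => decide (s ∈ b))
  if i = C.length - 1 ∧ 0 < i then
    C.take (i - 1) ++ [C.getD (i - 1) ∅ ∪ ((C.getD i ∅).erase s)]
  else deleteA C s

/-- `w` is a type B `C`-permutation. -/
def IsCPermB : List (Finset ℕ) → List ℕ → Prop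
  | C, [] => ∀ B ∈ C, B = ∅
  | C, s :: w => AdmissibleB C s ∧ IsCPermB (deleteB C s) w

/-- A sequence of elements that can be successively (type A) deleted from `C`. -/
def AdmissibleSeqA : List (Finset ℕ) → List ℕ → Prop
  | _, [] => True
  | C, s :: w => AdmissibleA C s ∧ AdmissibleSeqA (deleteA C s) w

/-- Number of descents of a list: the number of adjacent pairs that decrease. -/
def listDescents {α : Type*} [LinearOrder α] (l : List α) : ℕ :=
  (l.zip l.tail).countP (fun p => decide (p.2 < p.1))

/-- Eulerian number `A(n,k)`: permutations of `{1,…,n}` with exactly `k-1` descents. -/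
def eulerianA (n k : ℕ) : ℕ :=
  (List.range' 1 n).permutations.countP (fun l => decide (listDescents l = k - 1))

/-- `A(m,t;r)`: permutations of `{1,…,m+1}` with `t-1` descents and first entry `r+1`
(declared to be `0` when `t = 0`; it vanishes automatically when `t > m+1`). -/
def eulerianFirst (m t r : ℕ) : ℕ :=
  if t = 0 then 0 else
    (List.range' 1 (m + 1)).permutations.countP
      (fun l => decide (listDescents l = t - 1 ∧ l.headI = r + 1))

/-- The index of `t` in the `C`-permutation `w`: the (1-based) position of the block
containing `t` just before `t` is deleted. -/
def indexFn (C : List (Finset ℕ)) : List ℕ → ℕ → ℕ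
  | [], _ => 0
  | s :: w, t =>
      if t = s then C.findIdx (fun b => decide (t ∈ b)) + 1
      else indexFn (deleteA C s) w t

/-- An index function of `C`: any function sending each element of `C_i` into `{1,…,i}`
(1-based). -/
def IsIndexFn (C : List (Finset ℕ)) (I : ℕ → ℕ) : Prop :=
  ∀ i, i < C.length → ∀ s ∈ C.getD i ∅, 1 ≤ I s ∧ I s ≤ i + 1

/-- `C` is superdiagonal: `|C₁| + ⋯ + |C_i| ≥ i` for all `i`. -/
def Superdiagonal (C : List (Finset ℕ)) : Prop :=
  ∀ i, i ≤ C.length → i ≤ ∑ j ∈ Finset.range i, (C.getD j ∅).card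

/-- `C` is subdiagonal: `|C_n| + ⋯ + |C_{n-i+1}| ≥ i` for all `i`. -/
def Subdiagonal (C : List (Finset ℕ)) : Prop :=
  ∀ i, i ≤ C.length → i ≤ ∑ j ∈ Finset.range i, (C.getD (C.length - 1 - j) ∅).card

/-- The canonical division of `{1,…,c.sum}` with block sizes given by `c`. -/
def divisionOf (c : List ℕ) : List (Finset ℕ) :=
  (List.range c.length).map (fun i => Finset.Ioc ((c.take i).sum) ((c.take (i + 1)).sum))

/-- The number of `C`-permutations for a division with block sizes `c`. -/
noncomputable def NPerm (c : List ℕ) : ℕ :=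
  Nat.card {w : List ℕ // IsCPermA (divisionOf c) w}

/-- The division of `{1,…,n}` with all elements in (1-based) position `k`. -/
def midDivision (n k : ℕ) : List (Finset ℕ) :=
  List.replicate (k - 1) ∅ ++ [Finset.Icc 1 n] ++ List.replicate (n - k) ∅

/-- The hypersimplex `Δ_{k,n} ⊆ ℝ^{n+1}`. -/
def hypersimplex (n k : ℕ) : Set (Fin (n + 1) → ℝ) :=
  convexHull ℝ {x | ∃ T : Finset (Fin (n + 1)), T.card = k ∧
    x = fun i => if i ∈ T then (1 : ℝ) else 0}

/-- The permutohedron `P(y₁,…,y_m) ⊆ ℝ^m`. -/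
def permutohedron {m : ℕ} (y : Fin m → ℝ) : Set (Fin m → ℝ) :=
  convexHull ℝ {x | ∃ w : Equiv.Perm (Fin m), x = y ∘ w}

/-- The polytope `Γ_{k,n} ⊆ ℝ^n`, the convex hull of all `±e_{i₁} ± ⋯ ± e_{i_k}`. -/
def gammaPolytope (n k : ℕ) : Set (Fin n → ℝ) :=
  convexHull ℝ {x | ∃ T : Finset (Fin n), T.card = k ∧ ∃ ε : Fin n → ℝ,
    (∀ i, ε i = 1 ∨ ε i = -1) ∧ x = fun i => if i ∈ T then ε i else 0}

/-- The signed permutohedron `SP(y₁,…,y_n) ⊆ ℝ^n`. -/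
def signedPermutohedron {m : ℕ} (y : Fin m → ℝ) : Set (Fin m → ℝ) :=
  convexHull ℝ {x | ∃ w : Equiv.Perm (Fin m), ∃ ε : Fin m → ℝ,
    (∀ i, ε i = 1 ∨ ε i = -1) ∧ x = fun i => ε i * y (w i)}

/-!
Every type A deletion is a type B deletion with the same result, so type A `C`-permutations are
type B ones. Recording the block from which a type B `C`-permutation deletes each element gives an
index function of `C`, and there are `1^{|C₁|} ⋯ n^{|C_n|}` of these. The record determines the
permutation: if two permutations began with different letters, neither letter would move down when
the other is deleted, which forces both into the first block, where each must be the minimum.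

If `C` is superdiagonal, so is every type B deletion of it, and its last block has at most one
element; hence every type B deletion is of type A, and every index function is realised by
greedily deleting, among the elements that must leave from their current block, the smallest one
of the highest block. Conversely, a permutation along which no element ever moves down carries
superdiagonality back from the divisions it passes through to `C`. Finally, if `C` is not
superdiagonal, deleting minima of non-last blocks (type A steps that keep a deficit
`|C₁| + ⋯ + |C_k| < k`) leads to a last block with two elements, whose minimum is type B but not
type A admissible.
-/

open Finset

def blockIdx (C : List (Finset ℕ)) (t : ℕ) : ℕ := C.findIdx (fun b => decide (t ∈ b))

section Division

variable {C : List (Finset ℕ)} {S : Finset ℕ} {i t : ℕ}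

lemma lt_length_of_mem_getD (h : t ∈ C.getD i ∅) : i < C.length := by
  by_contra hi
  rw [List.getD_eq_default _ _ (not_lt.1 hi)] at h
  exact notMem_empty t h

namespace IsDivision

lemma eq_of_mem_getD (hC : IsDivision C S) {j : ℕ} (hi : t ∈ C.getD i ∅)
    (hj : t ∈ C.getD j ∅) : i = j := by
  by_contra hij
  rcases Nat.lt_or_gt_of_ne hij with h | h
  · exact lt_irrefl t (hC.2.2 i j h (lt_length_of_mem_getD hj) t hi t hj)
  · exact lt_irrefl t (hC.2.2 j i h (lt_length_of_mem_getD hi) t hj t hi)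

lemma blockIdx_eq (hC : IsDivision C S) (h : t ∈ C.getD i ∅) : blockIdx C t = i := by
  have hi := lt_length_of_mem_getD h
  rw [List.getD_eq_getElem _ _ hi] at h
  refine (List.findIdx_eq hi).2 ⟨decide_eq_true h, fun j hj => decide_eq_false fun ht => ?_⟩
  exact hj.ne (hC.eq_of_mem_getD (i := j) (by rwa [List.getD_eq_getElem])
    (by rwa [List.getD_eq_getElem]))

lemma mem_getD_blockIdx (hC : IsDivision C S) (ht : t ∈ S) : t ∈ C.getD (blockIdx C t) ∅ := by
  obtain ⟨i, -, hi⟩ := hC.1 t ht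
  rwa [hC.blockIdx_eq hi]

lemma mem_getD_iff (hC : IsDivision C S) : t ∈ C.getD i ∅ ↔ t ∈ S ∧ blockIdx C t = i :=
  ⟨fun h => ⟨hC.2.1 i (lt_length_of_mem_getD h) h, hC.blockIdx_eq h⟩,
    fun ⟨ht, hi⟩ => hi ▸ hC.mem_getD_blockIdx ht⟩

lemma blockIdx_lt_length (hC : IsDivision C S) (ht : t ∈ S) : blockIdx C t < C.length :=
  lt_length_of_mem_getD (hC.mem_getD_blockIdx ht)

lemma lt_of_blockIdx_lt (hC : IsDivision C S) {x y : ℕ} (hx : x ∈ S) (hy : y ∈ S)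
    (h : blockIdx C x < blockIdx C y) : x < y :=
  hC.2.2 _ _ h (hC.blockIdx_lt_length hy) x (hC.mem_getD_blockIdx hx) y (hC.mem_getD_blockIdx hy)

lemma eq_empty_of_forall_eq_empty (hC : IsDivision C S) (h : ∀ B ∈ C, B = ∅) : S = ∅ := by
  refine eq_empty_of_forall_notMem fun t ht => ?_
  have hlt := hC.blockIdx_lt_length ht
  have hmem := hC.mem_getD_blockIdx ht
  rw [List.getD_eq_getElem _ _ hlt, h _ (List.getElem_mem hlt)] at hmem
  exact notMem_empty t hmem

lemma filter_blockIdx_eq (hC : IsDivision C S) (i : ℕ) :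
    S.filter (blockIdx C · = i) = C.getD i ∅ := by
  ext t
  rw [mem_filter, hC.mem_getD_iff]

lemma filter_blockIdx_lt_length (hC : IsDivision C S) :
    S.filter (blockIdx C · < C.length) = S :=
  filter_true_of_mem fun _ ht => hC.blockIdx_lt_length ht

lemma sum_card_getD (hC : IsDivision C S) (k : ℕ) :
    ∑ j ∈ range k, #(C.getD j ∅) = #(S.filter (blockIdx C · < k)) := by
  rw [card_eq_sum_card_fiberwise (f := blockIdx C) (t := range k)
    (fun t ht => mem_range.2 (mem_filter.1 ht).2)]
  refine sum_congr rfl fun j hj => ?_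
  rw [← hC.filter_blockIdx_eq, filter_filter]
  congr 1
  ext t
  simp only [mem_filter]
  have := mem_range.1 hj
  constructor
  · rintro ⟨h1, rfl⟩; exact ⟨h1, this, rfl⟩
  · rintro ⟨h1, -, h2⟩; exact ⟨h1, h2⟩

lemma prod_blockIdx (hC : IsDivision C S) :
    ∏ t ∈ S, (blockIdx C t + 1) = ∏ i ∈ range C.length, (i + 1) ^ #(C.getD i ∅) := by
  rw [← prod_fiberwise_of_maps_to (g := blockIdx C) (t := range C.length)
    (fun t ht => mem_range.2 (hC.blockIdx_lt_length ht))]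
  refine prod_congr rfl fun i _ => ?_
  rw [hC.filter_blockIdx_eq, ← prod_const]
  exact prod_congr rfl fun t ht => by rw [hC.blockIdx_eq ht]

lemma superdiagonal_iff (hC : IsDivision C S) :
    Superdiagonal C ↔ ∀ k ≤ C.length, k ≤ #(S.filter (blockIdx C · < k)) := by
  simp only [Superdiagonal, hC.sum_card_getD]

lemma superdiagonal_of_length_le_one (hC : IsDivision C S) (hS : S.card = C.length)
    (h : C.length ≤ 1) : Superdiagonal C := by
  refine hC.superdiagonal_iff.2 fun k hk => ?_
  rcases Nat.eq_zero_or_pos k with rfl | hk0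
  · exact Nat.zero_le _
  · obtain rfl : k = C.length := by omega
    rw [hC.filter_blockIdx_lt_length, hS]

end IsDivision

end Division

/-- The block index, after `s` is deleted from block `i` of a division into `n` blocks, of an
element `t ≠ s` that was in block `p`. -/
def idxAfterDelete (i n s p t : ℕ) : ℕ :=
  if p < i then p else if p = i ∧ s < t ∧ i + 1 < n then i else p - 1

section IdxAfterDelete

variable {i n s p t : ℕ}

lemma idxAfterDelete_le : idxAfterDelete i n s p t ≤ p := by
  unfold idxAfterDelete; split_ifs <;> omega

lemma le_idxAfterDelete_add_one : p ≤ idxAfterDelete i n s p t + 1 := by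
  unfold idxAfterDelete; split_ifs <;> omega

lemma lt_or_eq_and_lt_of_idxAfterDelete_lt {q t' : ℕ}
    (h : idxAfterDelete i n s p t < idxAfterDelete i n s q t') : p < q ∨ (p = q ∧ t < t') := by
  unfold idxAfterDelete at h; split_ifs at h <;> omega

lemma eq_zero_of_idxAfterDelete_eq_self {j s' : ℕ} (h : idxAfterDelete j n s' i s = i)
    (h' : idxAfterDelete i n s j s' = j) : i = 0 ∧ j = 0 := by
  unfold idxAfterDelete at h h'
  split_ifs at h h' <;> omega

end IdxAfterDelete

section Deletion

variable {C : List (Finset ℕ)} {S : Finset ℕ} {s t : ℕ}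

lemma IsDivision.admissibleB_iff (hC : IsDivision C S) :
    AdmissibleB C s ↔ s ∈ S ∧ (blockIdx C s = 0 → ∀ t ∈ C.getD 0 ∅, s ≤ t) := by
  constructor
  · rintro ⟨i, -, hs, h⟩
    rw [hC.mem_getD_iff] at hs
    refine ⟨hs.1, fun h0 => ?_⟩
    rcases h with ⟨-, h⟩ | h
    · exact h
    · exact absurd (hs.2.symm.trans h0) h
  · rintro ⟨hs, h⟩
    refine ⟨blockIdx C s, hC.blockIdx_lt_length hs, hC.mem_getD_blockIdx hs, ?_⟩
    by_cases h0 : blockIdx C s = 0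
    · exact Or.inl ⟨h0, h0 ▸ h h0⟩
    · exact Or.inr h0

lemma IsDivision.admissibleA_iff (hC : IsDivision C S) :
    AdmissibleA C s ↔ s ∈ S ∧
      ((blockIdx C s = 0 ∧ ∀ t ∈ C.getD 0 ∅, s ≤ t) ∨
       (blockIdx C s = C.length - 1 ∧ ∀ t ∈ C.getD (blockIdx C s) ∅, t ≤ s) ∨
       (0 < blockIdx C s ∧ blockIdx C s + 1 < C.length)) := by
  constructor
  · rintro ⟨i, -, hs, h⟩
    rw [hC.mem_getD_iff] at hs
    exact ⟨hs.1, hs.2 ▸ h⟩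
  · rintro ⟨hs, h⟩
    exact ⟨blockIdx C s, hC.blockIdx_lt_length hs, hC.mem_getD_blockIdx hs, h⟩

lemma admissibleB_of_admissibleA (hC : IsDivision C S) (hS : S.card = C.length)
    (hs : AdmissibleA C s) : AdmissibleB C s := by
  obtain ⟨hsS, hadm⟩ := hC.admissibleA_iff.1 hs
  refine hC.admissibleB_iff.2 ⟨hsS, fun h0 t ht => ?_⟩
  rcases hadm with ⟨-, h⟩ | ⟨h1, -⟩ | h
  · exact h t ht
  · have : t = s := card_le_one.1 (by omega) t (hC.2.1 0 (lt_length_of_mem_getD ht) ht) s hsS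
    omega
  · omega

lemma getD_deleteB (hC : IsDivision C S) (hS : S.card = C.length) (hs : AdmissibleB C s)
    (k : ℕ) : (deleteB C s).getD k ∅ = (S.erase s).filter
      (fun t => idxAfterDelete (blockIdx C s) C.length s (blockIdx C t) t = k) := by
  obtain ⟨hsS, hmin⟩ := hC.admissibleB_iff.1 hs
  simp only [hC.mem_getD_iff] at hmin
  have hlt : ∀ t ∈ S, blockIdx C t < C.length := fun t ht => hC.blockIdx_lt_length ht
  have hone : C.length = 1 → ∀ t ∈ S, t = s := fun h1 t ht =>
    card_le_one.1 (hS.trans h1).le t ht s hsS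
  have hi : C.findIdx (fun b => decide (s ∈ b)) = blockIdx C s := rfl
  -- In each shape of `deleteB` (one block; `s` in the first, last or a middle block), writing
  -- `t ∈ C.getD j ∅` as `t ∈ S ∧ blockIdx C t = j` leaves arithmetic on block indices.
  ext t
  simp only [deleteB, deleteA, hi]
  split_ifs
  all_goals simp only [List.getD_eq_getElem?_getD, List.getElem?_append, List.getElem?_cons,
    List.length_append, List.length_cons, List.length_nil, List.length_take, List.getElem?_take,
    List.getElem?_drop]
  all_goals try split_ifs
  all_goals simp only [Option.getD_some, Option.getD_none, ← List.getD_eq_getElem?_getD,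
    List.getElem?_nil, mem_union, mem_filter, mem_erase, hC.mem_getD_iff, notMem_empty,
    idxAfterDelete]
  all_goals clear hs hi
  all_goals grind

lemma length_deleteB (hC : IsDivision C S) (hs : AdmissibleB C s) :
    (deleteB C s).length = C.length - 1 := by
  have hlt := hC.blockIdx_lt_length (hC.admissibleB_iff.1 hs).1
  have hi : C.findIdx (fun b => decide (s ∈ b)) = blockIdx C s := rfl
  simp only [deleteB, deleteA, hi]
  split_ifs <;> simp <;> omega

lemma isDivision_deleteB (hC : IsDivision C S) (hS : S.card = C.length)
    (hs : AdmissibleB C s) : IsDivision (deleteB C s) (S.erase s) := by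
  have hmem : ∀ {t k}, t ∈ (deleteB C s).getD k ∅ ↔
      t ∈ S.erase s ∧ idxAfterDelete (blockIdx C s) C.length s (blockIdx C t) t = k := by
    intro t k
    rw [getD_deleteB hC hS hs, mem_filter]
  refine ⟨fun t ht => ?_, fun k _ t ht => (hmem.1 ht).1, fun a b hab _ x hx y hy => ?_⟩
  · have h := hmem.2 ⟨ht, rfl⟩
    exact ⟨_, lt_length_of_mem_getD h, h⟩
  · obtain ⟨hxS, rfl⟩ := hmem.1 hx
    obtain ⟨hyS, rfl⟩ := hmem.1 hy
    rcases lt_or_eq_and_lt_of_idxAfterDelete_lt hab with h | ⟨-, h⟩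
    · exact hC.lt_of_blockIdx_lt (mem_of_mem_erase hxS) (mem_of_mem_erase hyS) h
    · exact h

lemma card_erase_eq_length_deleteB (hC : IsDivision C S) (hS : S.card = C.length)
    (hs : AdmissibleB C s) : (S.erase s).card = (deleteB C s).length := by
  rw [card_erase_of_mem (hC.admissibleB_iff.1 hs).1, hS, length_deleteB hC hs]

lemma blockIdx_deleteB (hC : IsDivision C S) (hS : S.card = C.length) (hs : AdmissibleB C s)
    (ht : t ∈ S) (hts : t ≠ s) :
    blockIdx (deleteB C s) t = idxAfterDelete (blockIdx C s) C.length s (blockIdx C t) t := by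
  refine (isDivision_deleteB hC hS hs).blockIdx_eq ?_
  rw [getD_deleteB hC hS hs]
  exact mem_filter.2 ⟨mem_erase.2 ⟨hts, ht⟩, rfl⟩

lemma deleteA_eq_deleteB (hC : IsDivision C S) (hs : AdmissibleA C s) :
    deleteA C s = deleteB C s := by
  obtain ⟨-, hadm⟩ := hC.admissibleA_iff.1 hs
  have hi : C.findIdx (fun b => decide (s ∈ b)) = blockIdx C s := rfl
  simp only [deleteB, hi]
  split_ifs with h
  · have hmax : ∀ t ∈ C.getD (blockIdx C s) ∅, t ≤ s := by
      rcases hadm with ⟨h0, -⟩ | ⟨-, hmax⟩ | ⟨-, h1⟩ <;> first | exact hmax | omega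
    simp only [deleteA, hi, if_neg (show ¬C.length ≤ 1 by omega), if_neg h.2.ne', if_pos h.1]
    congr 3
    ext t
    simp only [mem_filter, mem_erase]
    constructor
    · exact fun ⟨ht, hts⟩ => ⟨hts.ne, ht⟩
    · exact fun ⟨hts, ht⟩ => ⟨ht, lt_of_le_of_ne (hmax t ht) hts⟩
  · rfl

end Deletion

section Superdiagonal

variable {C : List (Finset ℕ)} {S : Finset ℕ} {s : ℕ}

lemma Superdiagonal.card_getD_last_le_one (hsd : Superdiagonal C) (hC : IsDivision C S)
    (hS : S.card = C.length) : #(C.getD (C.length - 1) ∅) ≤ 1 := by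
  rcases Nat.eq_zero_or_pos C.length with h0 | hpos
  · simp [List.eq_nil_of_length_eq_zero h0]
  have h := hsd (C.length - 1) (Nat.sub_le _ _)
  have htotal : ∑ j ∈ range C.length, #(C.getD j ∅) = C.length := by
    rw [hC.sum_card_getD, hC.filter_blockIdx_lt_length, hS]
  set m := C.length - 1
  rw [show C.length = m + 1 by omega, sum_range_succ] at htotal
  omega

lemma Superdiagonal.blockIdx_add_one_lt (hsd : Superdiagonal C) (hC : IsDivision C S)
    (hS : S.card = C.length) {t : ℕ} (hs : s ∈ S) (ht : t ∈ S) (hts : t ≠ s)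
    (heq : blockIdx C t = blockIdx C s) : blockIdx C s + 1 < C.length := by
  by_contra hcon
  have hlast : blockIdx C s = C.length - 1 := by
    have := hC.blockIdx_lt_length hs
    omega
  refine hts (card_le_one.1 (hsd.card_getD_last_le_one hC hS) t ?_ s ?_)
  · rw [← hlast, ← heq]; exact hC.mem_getD_blockIdx ht
  · rw [← hlast]; exact hC.mem_getD_blockIdx hs

lemma Superdiagonal.admissibleA (hsd : Superdiagonal C) (hC : IsDivision C S)
    (hS : S.card = C.length) (hs : AdmissibleB C s) : AdmissibleA C s := by
  obtain ⟨hsS, hmin⟩ := hC.admissibleB_iff.1 hs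
  have hlt := hC.blockIdx_lt_length hsS
  refine hC.admissibleA_iff.2 ⟨hsS, ?_⟩
  by_cases h0 : blockIdx C s = 0
  · exact Or.inl ⟨h0, hmin h0⟩
  by_cases hmid : blockIdx C s + 1 < C.length
  · exact Or.inr (Or.inr ⟨Nat.pos_of_ne_zero h0, hmid⟩)
  refine Or.inr (Or.inl ⟨by omega, fun t ht => ?_⟩)
  obtain ⟨htS, hts⟩ := hC.mem_getD_iff.1 ht
  by_contra hst
  exact hmid (hsd.blockIdx_add_one_lt hC hS hsS htS (by omega) hts)

lemma card_filter_blockIdx_deleteB_le (hC : IsDivision C S) (hS : S.card = C.length)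
    (hs : AdmissibleB C s) {k m : ℕ} (h : ∀ t ∈ S, t ≠ s →
      idxAfterDelete (blockIdx C s) C.length s (blockIdx C t) t < k → blockIdx C t < m) :
    #((S.erase s).filter (blockIdx (deleteB C s) · < k)) ≤
      #((S.filter (blockIdx C · < m)).erase s) := by
  refine card_le_card fun t ht => ?_
  obtain ⟨ht, hk⟩ := mem_filter.1 ht
  obtain ⟨hts, htS⟩ := mem_erase.1 ht
  rw [blockIdx_deleteB hC hS hs htS hts] at hk
  exact mem_erase.2 ⟨hts, mem_filter.2 ⟨htS, h t htS hts hk⟩⟩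

lemma card_filter_blockIdx_le_deleteB (hC : IsDivision C S) (hS : S.card = C.length)
    (hs : AdmissibleB C s) {k m : ℕ} (h : ∀ t ∈ S, t ≠ s →
      blockIdx C t < m → idxAfterDelete (blockIdx C s) C.length s (blockIdx C t) t < k) :
    #((S.filter (blockIdx C · < m)).erase s) ≤
      #((S.erase s).filter (blockIdx (deleteB C s) · < k)) := by
  refine card_le_card fun t ht => ?_
  obtain ⟨hts, ht⟩ := mem_erase.1 ht
  obtain ⟨htS, hm⟩ := mem_filter.1 ht
  rw [mem_filter, mem_erase, blockIdx_deleteB hC hS hs htS hts]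
  exact ⟨⟨hts, htS⟩, h t htS hts hm⟩

lemma superdiagonal_deleteB (hsd : Superdiagonal C) (hC : IsDivision C S)
    (hS : S.card = C.length) (hs : AdmissibleB C s) : Superdiagonal (deleteB C s) := by
  have hsS := (hC.admissibleB_iff.1 hs).1
  rw [hC.superdiagonal_iff] at hsd
  rw [(isDivision_deleteB hC hS hs).superdiagonal_iff, length_deleteB hC hs]
  intro k hk
  by_cases hik : blockIdx C s < k
  · have h := card_filter_blockIdx_le_deleteB hC hS hs (m := k + 1) (k := k) fun t _ _ ht => by
      unfold idxAfterDelete; split_ifs <;> omega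
    rw [card_erase_of_mem (mem_filter.2 ⟨hsS, by omega⟩)] at h
    have := hsd (k + 1) (by omega)
    omega
  · have h := card_filter_blockIdx_le_deleteB hC hS hs (m := k) (k := k) fun t _ _ ht => by
      unfold idxAfterDelete; split_ifs <;> omega
    have hs_nmem : s ∉ S.filter (blockIdx C · < k) := fun h => hik (mem_filter.1 h).2
    rw [erase_eq_of_notMem hs_nmem] at h
    exact (hsd k (by omega)).trans h

lemma not_superdiagonal_deleteB (hsd : ¬Superdiagonal C) (hC : IsDivision C S)
    (hS : S.card = C.length) (hs : AdmissibleB C s)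
    (hmin : ∀ t ∈ C.getD (blockIdx C s) ∅, s ≤ t) (hlast : blockIdx C s + 1 < C.length) :
    ¬Superdiagonal (deleteB C s) := by
  have hsS := (hC.admissibleB_iff.1 hs).1
  rw [hC.superdiagonal_iff] at hsd
  rw [(isDivision_deleteB hC hS hs).superdiagonal_iff, length_deleteB hC hs]
  push Not at hsd ⊢
  obtain ⟨k, hk, hdef⟩ := hsd
  by_cases hik : blockIdx C s < k
  · refine ⟨k - 1, by omega, ?_⟩
    have h := card_filter_blockIdx_deleteB_le hC hS hs (k := k - 1) (m := k) fun t _ _ ht => by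
      have := le_idxAfterDelete_add_one (i := blockIdx C s) (n := C.length) (s := s)
        (p := blockIdx C t) (t := t)
      omega
    have hs_mem : s ∈ S.filter (blockIdx C · < k) := mem_filter.2 ⟨hsS, hik⟩
    rw [card_erase_of_mem hs_mem] at h
    have := card_pos.2 ⟨s, hs_mem⟩
    omega
  · refine ⟨k, by omega, ?_⟩
    have h := card_filter_blockIdx_deleteB_le hC hS hs (k := k) (m := k) fun t ht hts hkt => by
      have hst : blockIdx C t = blockIdx C s → s ≤ t :=
        fun h => hmin t (h ▸ hC.mem_getD_blockIdx ht)
      unfold idxAfterDelete at hkt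
      split_ifs at hkt <;> omega
    exact (h.trans card_erase_le).trans_lt hdef

end Superdiagonal

section CPerm

variable {C : List (Finset ℕ)} {S : Finset ℕ} {w : List ℕ}

lemma IsCPermA.isCPermB (hw : IsCPermA C w) (hC : IsDivision C S) (hS : S.card = C.length) :
    IsCPermB C w := by
  induction w generalizing C S with
  | nil => exact hw
  | cons s w ih =>
    obtain ⟨hsA, hw⟩ := hw
    have hsB := admissibleB_of_admissibleA hC hS hsA
    rw [deleteA_eq_deleteB hC hsA] at hw
    exact ⟨hsB, ih hw (isDivision_deleteB hC hS hsB) (card_erase_eq_length_deleteB hC hS hsB)⟩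

lemma Superdiagonal.isCPermA (hsd : Superdiagonal C) (hw : IsCPermB C w) (hC : IsDivision C S)
    (hS : S.card = C.length) : IsCPermA C w := by
  induction w generalizing C S with
  | nil => exact hw
  | cons s w ih =>
    obtain ⟨hsB, hw⟩ := hw
    have hsA := hsd.admissibleA hC hS hsB
    refine ⟨hsA, ?_⟩
    rw [deleteA_eq_deleteB hC hsA]
    exact ih (superdiagonal_deleteB hsd hC hS hsB) hw (isDivision_deleteB hC hS hsB)
      (card_erase_eq_length_deleteB hC hS hsB)

lemma exists_isCPermB (hC : IsDivision C S) (hS : S.card = C.length) : ∃ w, IsCPermB C w := by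
  induction hn : C.length generalizing C S with
  | zero => exact ⟨[], fun B hB => by simp [List.eq_nil_of_length_eq_zero hn] at hB⟩
  | succ n ih =>
    have hne : S.Nonempty := by rw [← Finset.card_pos, hS, hn]; exact n.succ_pos
    have hs : AdmissibleB C (S.min' hne) := hC.admissibleB_iff.2
      ⟨S.min'_mem hne, fun _ t ht => S.min'_le t (hC.2.1 0 (lt_length_of_mem_getD ht) ht)⟩
    obtain ⟨w, hw⟩ := ih (isDivision_deleteB hC hS hs) (card_erase_eq_length_deleteB hC hS hs)
      (by rw [length_deleteB hC hs, hn]; rfl)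
    exact ⟨S.min' hne :: w, hs, hw⟩

lemma exists_admissibleB_not_admissibleA (hC : IsDivision C S) (hlen : 1 < C.length)
    (hbig : 1 < #(C.getD (C.length - 1) ∅)) : ∃ s, AdmissibleB C s ∧ ¬AdmissibleA C s := by
  obtain ⟨a, ha, b, hb, hab⟩ := one_lt_card.1 hbig
  set B := C.getD (C.length - 1) ∅
  have hne : B.Nonempty := ⟨a, ha⟩
  have hsB := B.min'_mem hne
  have hlast : blockIdx C (B.min' hne) = C.length - 1 := hC.blockIdx_eq hsB
  refine ⟨B.min' hne, hC.admissibleB_iff.2 ⟨(hC.mem_getD_iff.1 hsB).1, by omega⟩, ?_⟩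
  rw [hC.admissibleA_iff, hlast]
  rintro ⟨-, ⟨h0, -⟩ | ⟨-, hmax⟩ | ⟨-, h⟩⟩
  · omega
  · have := hmax a ha
    have := hmax b hb
    have := B.min'_le a ha
    have := B.min'_le b hb
    omega
  · omega

lemma exists_admissibleA_min_of_card_getD_last_le_one (hC : IsDivision C S)
    (hS : S.card = C.length) (hlen : 1 < C.length) (hsmall : #(C.getD (C.length - 1) ∅) ≤ 1) :
    ∃ s, AdmissibleA C s ∧ (∀ t ∈ C.getD (blockIdx C s) ∅, s ≤ t) ∧
      blockIdx C s + 1 < C.length := by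
  obtain ⟨t, htS, htn⟩ : ∃ t ∈ S, t ∉ C.getD (C.length - 1) ∅ := by
    by_contra! h
    have := card_le_card h
    omega
  have ht := hC.mem_getD_blockIdx htS
  have hti : blockIdx C t + 1 < C.length := by
    have := hC.blockIdx_lt_length htS
    have : blockIdx C t ≠ C.length - 1 := fun h => htn (h ▸ ht)
    omega
  set B := C.getD (blockIdx C t) ∅
  have hsB : B.min' ⟨t, ht⟩ ∈ B := B.min'_mem _
  have hsidx := hC.blockIdx_eq hsB
  refine ⟨B.min' ⟨t, ht⟩, hC.admissibleA_iff.2 ⟨(hC.mem_getD_iff.1 hsB).1, ?_⟩,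
    hsidx ▸ fun u hu => B.min'_le u hu, hsidx ▸ hti⟩
  rw [hsidx]
  rcases Nat.eq_zero_or_pos (blockIdx C t) with h0 | hpos
  · exact Or.inl ⟨h0, h0 ▸ fun u hu => B.min'_le u hu⟩
  · exact Or.inr (Or.inr ⟨hpos, hti⟩)

lemma exists_isCPermB_not_isCPermA (hsd : ¬Superdiagonal C) (hC : IsDivision C S)
    (hS : S.card = C.length) : ∃ w, IsCPermB C w ∧ ¬IsCPermA C w := by
  induction hn : C.length generalizing C S with
  | zero => exact absurd (hC.superdiagonal_of_length_le_one hS (by omega)) hsd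
  | succ n ih =>
    have hlen : 1 < C.length :=
      not_le.1 fun h => hsd (hC.superdiagonal_of_length_le_one hS h)
    by_cases hbig : 1 < #(C.getD (C.length - 1) ∅)
    · obtain ⟨s, hsB, hsA⟩ := exists_admissibleB_not_admissibleA hC hlen hbig
      obtain ⟨v, hv⟩ := exists_isCPermB (isDivision_deleteB hC hS hsB)
        (card_erase_eq_length_deleteB hC hS hsB)
      exact ⟨s :: v, ⟨hsB, hv⟩, fun h => hsA h.1⟩
    · obtain ⟨s, hsA, hmin, hlast⟩ :=
        exists_admissibleA_min_of_card_getD_last_le_one hC hS hlen (not_lt.1 hbig)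
      have hsB := admissibleB_of_admissibleA hC hS hsA
      obtain ⟨v, hvB, hvA⟩ := ih (not_superdiagonal_deleteB hsd hC hS hsB hmin hlast)
        (isDivision_deleteB hC hS hsB) (card_erase_eq_length_deleteB hC hS hsB)
        (by rw [length_deleteB hC hsB, hn]; rfl)
      refine ⟨s :: v, ⟨hsB, hvB⟩, fun h => hvA ?_⟩
      rw [← deleteA_eq_deleteB hC hsA]
      exact h.2

end CPerm

/-- The (0-based) index of the block from which `t` is deleted along the type B
`C`-permutation `w`. -/
def indexB : List (Finset ℕ) → List ℕ → ℕ → ℕ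
  | _, [], _ => 0
  | C, s :: w, t => if t = s then blockIdx C s else indexB (deleteB C s) w t

section IndexB

variable {C : List (Finset ℕ)} {S : Finset ℕ} {w : List ℕ} {s t : ℕ}

@[simp] lemma indexB_cons_self : indexB C (s :: w) s = blockIdx C s := if_pos rfl

lemma indexB_cons_of_ne (h : t ≠ s) : indexB C (s :: w) t = indexB (deleteB C s) w t :=
  if_neg h

lemma indexB_le_blockIdx (hw : IsCPermB C w) (hC : IsDivision C S) (hS : S.card = C.length)
    (ht : t ∈ S) : indexB C w t ≤ blockIdx C t := by
  induction w generalizing C S with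
  | nil => exact absurd ht (by rw [hC.eq_empty_of_forall_eq_empty hw]; exact notMem_empty t)
  | cons s w ih =>
    obtain ⟨hs, hw⟩ := hw
    by_cases hts : t = s
    · rw [hts, indexB_cons_self]
    · rw [indexB_cons_of_ne hts]
      calc indexB (deleteB C s) w t ≤ blockIdx (deleteB C s) t :=
            ih hw (isDivision_deleteB hC hS hs) (card_erase_eq_length_deleteB hC hS hs)
              (mem_erase.2 ⟨hts, ht⟩)
        _ ≤ blockIdx C t := by
            rw [blockIdx_deleteB hC hS hs ht hts]
            exact idxAfterDelete_le

lemma idxAfterDelete_eq_blockIdx_of_le_indexB (hs : AdmissibleB C s)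
    (hw : IsCPermB (deleteB C s) w) (hC : IsDivision C S) (hS : S.card = C.length) (ht : t ∈ S)
    (hts : t ≠ s) (hle : blockIdx C t ≤ indexB C (s :: w) t) :
    idxAfterDelete (blockIdx C s) C.length s (blockIdx C t) t = blockIdx C t := by
  rw [indexB_cons_of_ne hts] at hle
  have := indexB_le_blockIdx hw (isDivision_deleteB hC hS hs)
    (card_erase_eq_length_deleteB hC hS hs) (mem_erase.2 ⟨hts, ht⟩)
  rw [blockIdx_deleteB hC hS hs ht hts] at this
  exact le_antisymm idxAfterDelete_le (hle.trans this)

lemma eq_of_indexB_eq {w' : List ℕ} (hw : IsCPermB C w) (hw' : IsCPermB C w')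
    (hC : IsDivision C S) (hS : S.card = C.length)
    (h : ∀ t ∈ S, indexB C w t = indexB C w' t) : w = w' := by
  induction w generalizing C S w' with
  | nil =>
    cases w' with
    | nil => rfl
    | cons s' v' =>
      have := (hC.admissibleB_iff.1 hw'.1).1
      rw [hC.eq_empty_of_forall_eq_empty hw] at this
      exact absurd this (notMem_empty s')
  | cons s v ih =>
    cases w' with
    | nil =>
      have := (hC.admissibleB_iff.1 hw.1).1
      rw [hC.eq_empty_of_forall_eq_empty hw'] at this
      exact absurd this (notMem_empty s)
    | cons s' v' =>
      obtain ⟨hs, hv⟩ := hw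
      obtain ⟨hs', hv'⟩ := hw'
      obtain ⟨hsS, hsmin⟩ := hC.admissibleB_iff.1 hs
      obtain ⟨hs'S, hs'min⟩ := hC.admissibleB_iff.1 hs'
      by_cases hss : s = s'
      · subst hss
        refine congrArg _ (ih hv hv' (isDivision_deleteB hC hS hs)
          (card_erase_eq_length_deleteB hC hS hs) fun t ht => ?_)
        have := h t (mem_of_mem_erase ht)
        rwa [indexB_cons_of_ne (ne_of_mem_erase ht), indexB_cons_of_ne (ne_of_mem_erase ht)]
          at this
      · have e : blockIdx C s = indexB C (s' :: v') s := by rw [← h s hsS, indexB_cons_self]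
        have e' : indexB C (s :: v) s' = blockIdx C s' := by rw [h s' hs'S, indexB_cons_self]
        obtain ⟨h0, h0'⟩ := eq_zero_of_idxAfterDelete_eq_self
          (idxAfterDelete_eq_blockIdx_of_le_indexB hs' hv' hC hS hsS hss e.le)
          (idxAfterDelete_eq_blockIdx_of_le_indexB hs hv hC hS hs'S (Ne.symm hss) e'.ge)
        have := hsmin h0 s' (h0' ▸ hC.mem_getD_blockIdx hs'S)
        have := hs'min h0' s (h0 ▸ hC.mem_getD_blockIdx hsS)
        omega

lemma superdiagonal_of_indexB_eq_blockIdx (hw : IsCPermB C w) (hC : IsDivision C S)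
    (hS : S.card = C.length) (h : ∀ t ∈ S, indexB C w t = blockIdx C t) : Superdiagonal C := by
  induction w generalizing C S with
  | nil =>
    refine hC.superdiagonal_of_length_le_one hS ?_
    rw [← hS, hC.eq_empty_of_forall_eq_empty hw, card_empty]
    exact Nat.zero_le _
  | cons s w ih =>
    obtain ⟨hs, hw⟩ := hw
    have hD := isDivision_deleteB hC hS hs
    have hidx : ∀ t ∈ S.erase s, blockIdx (deleteB C s) t = blockIdx C t := fun t ht => by
      rw [blockIdx_deleteB hC hS hs (mem_of_mem_erase ht) (ne_of_mem_erase ht)]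
      exact idxAfterDelete_eq_blockIdx_of_le_indexB hs hw hC hS (mem_of_mem_erase ht)
        (ne_of_mem_erase ht) (h t (mem_of_mem_erase ht)).ge
    have hsdD := ih hw hD (card_erase_eq_length_deleteB hC hS hs) fun t ht => by
      rw [hidx t ht, ← indexB_cons_of_ne (ne_of_mem_erase ht), h t (mem_of_mem_erase ht)]
    rw [hD.superdiagonal_iff, length_deleteB hC hs] at hsdD
    refine hC.superdiagonal_iff.2 fun k hk => ?_
    rcases hk.lt_or_eq with hk | rfl
    · calc k ≤ #((S.erase s).filter (blockIdx (deleteB C s) · < k)) := hsdD k (by omega)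
        _ ≤ #(S.filter (blockIdx C · < k)) := card_le_card fun t ht => by
          rw [mem_filter] at ht ⊢
          exact ⟨mem_of_mem_erase ht.1, hidx t ht.1 ▸ ht.2⟩
    · rw [hC.filter_blockIdx_lt_length, hS]

end IndexB

section Greedy

variable {C : List (Finset ℕ)} {S : Finset ℕ} {I : ℕ → ℕ}

lemma Superdiagonal.exists_admissibleB_le_blockIdx_deleteB (hsd : Superdiagonal C)
    (hC : IsDivision C S) (hS : S.card = C.length) (hI : ∀ t ∈ S, I t ≤ blockIdx C t)
    (hne : S.Nonempty) : ∃ s, AdmissibleB C s ∧ I s = blockIdx C s ∧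
      ∀ t ∈ S.erase s, I t ≤ blockIdx (deleteB C s) t := by
  set T := S.filter (fun t => I t = blockIdx C t)
  have hT : T.Nonempty := by
    obtain ⟨t, ht⟩ := card_pos.1 (hC.superdiagonal_iff.1 hsd 1 (by
      have := hne.card_pos; omega))
    rw [mem_filter] at ht
    exact ⟨t, mem_filter.2 ⟨ht.1, by have := hI t ht.1; omega⟩⟩
  -- the smallest element of the highest block among those that must leave their current block
  obtain ⟨s, hsT, hsmax⟩ :=
    T.exists_max_image (fun t => toLex (blockIdx C t, OrderDual.toDual t)) hT
  rw [mem_filter] at hsT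
  have hmax : ∀ t ∈ S, I t = blockIdx C t →
      blockIdx C t < blockIdx C s ∨ (blockIdx C t = blockIdx C s ∧ s ≤ t) := fun t ht htI => by
    simpa [Prod.Lex.le_iff] using hsmax t (mem_filter.2 ⟨ht, htI⟩)
  have hs : AdmissibleB C s := by
    refine hC.admissibleB_iff.2 ⟨hsT.1, fun h0 t ht => ?_⟩
    obtain ⟨htS, ht0⟩ := hC.mem_getD_iff.1 ht
    have := hI t htS
    rcases hmax t htS (by omega) with h | h <;> omega
  refine ⟨s, hs, hsT.2, fun t ht => ?_⟩
  have hts := ne_of_mem_erase ht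
  have htS := mem_of_mem_erase ht
  have h1 := hI t htS
  have h2 := hmax t htS
  have h3 := hsd.blockIdx_add_one_lt hC hS hsT.1 htS hts
  rw [blockIdx_deleteB hC hS hs htS hts]
  unfold idxAfterDelete
  split_ifs <;> omega

lemma Superdiagonal.exists_isCPermB_indexB_eq (hsd : Superdiagonal C) (hC : IsDivision C S)
    (hS : S.card = C.length) (hI : ∀ t ∈ S, I t ≤ blockIdx C t) :
    ∃ w, IsCPermB C w ∧ ∀ t ∈ S, indexB C w t = I t := by
  induction hn : C.length generalizing C S with
  | zero =>
    refine ⟨[], fun B hB => by simp [List.eq_nil_of_length_eq_zero hn] at hB, fun t ht => ?_⟩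
    rw [card_eq_zero.1 (hS.trans hn)] at ht
    exact absurd ht (notMem_empty t)
  | succ n ih =>
    obtain ⟨s, hs, hsI, hI'⟩ := hsd.exists_admissibleB_le_blockIdx_deleteB hC hS hI
      (card_pos.1 (by omega))
    obtain ⟨w, hw, hwI⟩ := ih (superdiagonal_deleteB hsd hC hS hs) (isDivision_deleteB hC hS hs)
      (card_erase_eq_length_deleteB hC hS hs) hI' (by rw [length_deleteB hC hs, hn]; rfl)
    refine ⟨s :: w, ⟨hs, hw⟩, fun t ht => ?_⟩
    by_cases hts : t = s
    · rw [hts, indexB_cons_self, hsI]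
    · rw [indexB_cons_of_ne hts]
      exact hwI t (mem_erase.2 ⟨hts, ht⟩)

end Greedy

lemma _root_.Function.Injective.nat_card_eq_iff_surjective {α β : Type*} [Finite β]
    {f : α → β} (hf : Function.Injective f) :
    Nat.card α = Nat.card β ↔ Function.Surjective f :=
  ⟨fun h => ((Nat.bijective_iff_injective_and_card f).2 ⟨hf, h⟩).2,
    fun h => Nat.card_eq_of_bijective f ⟨hf, h⟩⟩

section Counting

variable {C : List (Finset ℕ)} {S : Finset ℕ}

lemma IsDivision.card_pi_fin_blockIdx (hC : IsDivision C S) :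
    Nat.card ((t : S) → Fin (blockIdx C t + 1)) =
      ∏ i ∈ range C.length, (i + 1) ^ #(C.getD i ∅) := by
  rw [Nat.card_eq_fintype_card, Fintype.card_pi]
  simp only [Fintype.card_fin]
  rw [prod_coe_sort S (fun t => blockIdx C t + 1), hC.prod_blockIdx]

def indexMap (hC : IsDivision C S) (hS : S.card = C.length) :
    {w // IsCPermB C w} → ((t : S) → Fin (blockIdx C t + 1)) :=
  fun w t => ⟨indexB C w t, Nat.lt_succ_of_le (indexB_le_blockIdx w.2 hC hS t.2)⟩

lemma indexMap_injective (hC : IsDivision C S) (hS : S.card = C.length) :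
    Function.Injective (indexMap hC hS) := fun w w' h =>
  Subtype.ext (eq_of_indexB_eq w.2 w'.2 hC hS fun t ht =>
    congrArg Fin.val (congrFun h ⟨t, ht⟩))

lemma indexMap_surjective_iff (hC : IsDivision C S) (hS : S.card = C.length) :
    Function.Surjective (indexMap hC hS) ↔ Superdiagonal C := by
  constructor
  · intro h
    obtain ⟨⟨w, hw⟩, hwI⟩ := h fun t => ⟨blockIdx C t, Nat.lt_succ_self _⟩
    exact superdiagonal_of_indexB_eq_blockIdx hw hC hS fun t ht =>
      congrArg Fin.val (congrFun hwI ⟨t, ht⟩)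
  · intro hsd f
    obtain ⟨w, hw, hwI⟩ := hsd.exists_isCPermB_indexB_eq hC hS
      (I := fun t => if ht : t ∈ S then f ⟨t, ht⟩ else 0)
      fun t ht => by simpa [ht] using Nat.lt_succ_iff.1 (f ⟨t, ht⟩).2
    exact ⟨⟨w, hw⟩, funext fun t => Fin.ext (by simp [indexMap, hwI t t.2])⟩

theorem card_isCPermB_le_prod (hC : IsDivision C S) (hS : S.card = C.length) :
    Nat.card {w // IsCPermB C w} ≤ ∏ i ∈ range C.length, (i + 1) ^ #(C.getD i ∅) :=
  hC.card_pi_fin_blockIdx ▸ Nat.card_le_card_of_injective _ (indexMap_injective hC hS)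

theorem card_isCPermB_eq_prod_iff (hC : IsDivision C S) (hS : S.card = C.length) :
    Nat.card {w // IsCPermB C w} = ∏ i ∈ range C.length, (i + 1) ^ #(C.getD i ∅) ↔
      Superdiagonal C := by
  rw [← hC.card_pi_fin_blockIdx, ← indexMap_surjective_iff hC hS]
  exact (indexMap_injective hC hS).nat_card_eq_iff_surjective

lemma injective_map_isCPermB (hC : IsDivision C S) (hS : S.card = C.length) :
    Function.Injective (Subtype.map id fun w (hw : IsCPermA C w) => hw.isCPermB hC hS) :=
  Subtype.map_injective _ Function.injective_id

theorem card_isCPermA_le_card_isCPermB (hC : IsDivision C S) (hS : S.card = C.length) :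
    Nat.card {w // IsCPermA C w} ≤ Nat.card {w // IsCPermB C w} :=
  have := Finite.of_injective _ (indexMap_injective hC hS)
  Nat.card_le_card_of_injective _ (injective_map_isCPermB hC hS)

theorem card_isCPermA_eq_card_isCPermB_iff (hC : IsDivision C S) (hS : S.card = C.length) :
    Nat.card {w // IsCPermA C w} = Nat.card {w // IsCPermB C w} ↔ Superdiagonal C := by
  have := Finite.of_injective _ (indexMap_injective hC hS)
  rw [(injective_map_isCPermB hC hS).nat_card_eq_iff_surjective]
  constructor
  · intro h
    by_contra hsd
    obtain ⟨w, hwB, hwA⟩ := exists_isCPermB_not_isCPermA hsd hC hS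
    obtain ⟨⟨w', hw'⟩, e⟩ := h ⟨w, hwB⟩
    have e' : w' = w := congrArg Subtype.val e
    exact hwA (e' ▸ hw')
  · exact fun hsd w => ⟨⟨w, hsd.isCPermA w.2 hC hS⟩, rfl⟩

end Counting

/-- (#type A `C`-perms) ≤ (#type B `C`-perms) ≤ `1^{|C₁|}⋯n^{|C_n|}`,
each inequality being an equality iff `C` is superdiagonal. -/
theorem cpermA_le_cpermB (n : ℕ) (S : Finset ℕ) (C : List (Finset ℕ))
    (hS : S.card = n) (hlen : C.length = n) (hC : IsDivision C S) :
    Nat.card {w : List ℕ // IsCPermA C w} ≤ Nat.card {w : List ℕ // IsCPermB C w} ∧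
    Nat.card {w : List ℕ // IsCPermB C w} ≤
      ∏ i ∈ Finset.range n, (i + 1) ^ (C.getD i ∅).card ∧
    (Nat.card {w : List ℕ // IsCPermA C w} = Nat.card {w : List ℕ // IsCPermB C w} ↔
      Superdiagonal C) ∧
    (Nat.card {w : List ℕ // IsCPermB C w} =
        ∏ i ∈ Finset.range n, (i + 1) ^ (C.getD i ∅).card ↔ Superdiagonal C) := by
  subst hlen
  exact ⟨card_isCPermA_le_card_isCPermB hC hS, card_isCPermB_le_prod hC hS,
    card_isCPermA_eq_card_isCPermB_iff hC hS, card_isCPermB_eq_prod_iff hC hS⟩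

end MixedEulerian
end

section
/- Let 1 ≤ k ≤ n and let C be the division of {1,...,n} with all n elements in position k. Then a permutation w ∈ S_n is a type B C-permutation if and only if w has at most k-1 descents. -/
open scoped Pointwise
open MeasureTheory Nat

namespace MixedEulerian

/-!
Every type B deletion from the division with all of `{1,…,n}` in block `k` keeps it in one of
two shapes: a single nonempty block, or two adjacent nonempty blocks `B₁ < B₂` preceded by `a`
and followed by `b` empty blocks. Deleting `s` from a middle block leaves the remaining elements
below `s` and above `s` as the new adjacent pair, so the next entry lies in the lower block
exactly when `s` is followed by a descent. Only the first block restricts the choice (its minimum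
must go), so a listing `w` of `B₁ ∪ B₂` is a type B `C`-permutation of the
two-block division iff `des w + [w starts in B₁] ≤ a + 1`. A single block in first position
forces `w` to be increasing, while from a single block in last position any order works.
-/

section Descents

variable {α : Type*} [LinearOrder α]

lemma listDescents_cons_cons (a b : α) (l : List α) :
    listDescents (a :: b :: l) = listDescents (b :: l) + if b < a then 1 else 0 := by
  simp [listDescents, List.countP_cons]

lemma listDescents_eq_zero_iff {l : List α} : listDescents l = 0 ↔ l.SortedLE := by
  rw [List.sortedLE_iff_isChain]
  induction l with
  | nil => simp [listDescents]
  | cons a l ih =>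
    cases l with
    | nil => simp [listDescents]
    | cons b l =>
      rw [listDescents_cons_cons, List.isChain_cons_cons, ← ih]
      split_ifs with h <;> simp [h, le_of_not_gt]

lemma listDescents_cons_eq_zero_iff {a : α} {l : List α} :
    listDescents (a :: l) = 0 ↔ (∀ t ∈ l, a ≤ t) ∧ listDescents l = 0 := by
  simp only [listDescents_eq_zero_iff, List.sortedLE_iff_pairwise, List.pairwise_cons]

lemma listDescents_add_one_le_length {l : List α} (hl : l ≠ []) :
    listDescents l + 1 ≤ l.length := by
  have := List.countP_le_length (p := fun p : α × α => decide (p.2 < p.1)) (l := l.zip l.tail)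
  have := List.length_pos_iff.2 hl
  simp only [List.length_zip, List.length_tail] at *
  unfold listDescents
  omega

end Descents

lemma isCPermB_cons_iff {C : List (Finset ℕ)} {s : ℕ} {w : List ℕ} :
    IsCPermB C (s :: w) ↔ AdmissibleB C s ∧ IsCPermB (deleteB C s) w := Iff.rfl

lemma admissibleB_cons_iff {B : Finset ℕ} {l : List (Finset ℕ)} {s : ℕ} (hs : s ∈ B)
    (hl : ∀ C ∈ l, s ∉ C) : AdmissibleB (B :: l) s ↔ ∀ t ∈ B, s ≤ t := by
  constructor
  · rintro ⟨i, hi, hsi, ⟨rfl, hmin⟩ | hi0⟩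
    · exact hmin
    · obtain ⟨j, rfl⟩ := Nat.exists_eq_succ_of_ne_zero hi0
      simp only [List.getD_eq_getElem?_getD] at hsi
      cases h : l[j]? with
      | none => simp [h] at hsi
      | some C => simp [h] at hsi; exact absurd hsi (hl C (List.mem_of_getElem? h))
  · exact fun hmin => ⟨0, by simp, hs, Or.inl ⟨rfl, hmin⟩⟩

lemma findIdx_replicate_empty_append (a s : ℕ) (l : List (Finset ℕ)) :
    (List.replicate a ∅ ++ l).findIdx (fun B => decide (s ∈ B)) =
      a + l.findIdx (fun B => decide (s ∈ B)) := by
  induction a with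
  | zero => simp
  | succ a ih => simp [List.replicate_succ, List.findIdx_cons, ih]; omega

lemma deleteB_singleton (B : Finset ℕ) (s : ℕ) : deleteB [B] s = [] := by
  simp [deleteB, deleteA]

lemma deleteB_cons_replicate {B : Finset ℕ} {s : ℕ} (hs : s ∈ B) (b : ℕ) :
    deleteB (B :: List.replicate (b + 1) ∅) s = B.filter (s < ·) :: List.replicate b ∅ := by
  simp [deleteB, deleteA, List.findIdx_cons, hs, List.replicate_succ]

lemma deleteB_replicate_succ_append_singleton {B : Finset ℕ} {s : ℕ} (hs : s ∈ B) (a : ℕ) :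
    deleteB (List.replicate (a + 1) ∅ ++ [B]) s = List.replicate a ∅ ++ [B.erase s] := by
  simp [deleteB, hs, List.findIdx_cons, findIdx_replicate_empty_append,
    List.getD_eq_getElem?_getD, List.replicate_succ']

lemma isCPermB_cons_replicate_iff {w : List ℕ} (hw : w.Nodup) {b : ℕ}
    (hlen : w.length = b + 1) :
    IsCPermB (w.toFinset :: List.replicate b ∅) w ↔ listDescents w = 0 := by
  induction w generalizing b with
  | nil => simp at hlen
  | cons s w ih =>
    obtain ⟨hsw, hw⟩ := List.nodup_cons.1 hw
    have hadm : AdmissibleB ((s :: w).toFinset :: List.replicate b ∅) s ↔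
        ∀ t ∈ w, s ≤ t := by
      rw [admissibleB_cons_iff (by simp) (by simp)]
      simp
    rw [isCPermB_cons_iff, hadm, listDescents_cons_eq_zero_iff]
    cases b with
    | zero =>
      obtain rfl : w = [] := List.length_eq_zero_iff.1 (by simpa using hlen)
      simp [deleteB_singleton, IsCPermB, listDescents]
    | succ b =>
      rw [deleteB_cons_replicate (by simp)]
      refine and_congr_right fun hmin => ?_
      have hfilter : (s :: w).toFinset.filter (s < ·) = w.toFinset := by
        ext t
        simp only [Finset.mem_filter, List.mem_toFinset, List.mem_cons]
        constructor
        · rintro ⟨rfl | ht, hst⟩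
          · exact absurd hst (lt_irrefl _)
          · exact ht
        · exact fun ht => ⟨Or.inr ht, lt_of_le_of_ne (hmin t ht) (by rintro rfl; exact hsw ht)⟩
      rw [hfilter, ih hw (by simpa using hlen)]

lemma isCPermB_replicate_append_toFinset {w : List ℕ} (hw : w.Nodup) {a : ℕ}
    (hlen : w.length = a + 1) : IsCPermB (List.replicate a ∅ ++ [w.toFinset]) w := by
  induction w generalizing a with
  | nil => simp at hlen
  | cons s w ih =>
    obtain ⟨hsw, hw⟩ := List.nodup_cons.1 hw
    cases a with
    | zero =>
      obtain rfl : w = [] := List.length_eq_zero_iff.1 (by simpa using hlen)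
      exact (isCPermB_cons_replicate_iff (List.nodup_singleton s) rfl).2 rfl
    | succ a =>
      have hs : s ∈ (s :: w).toFinset := by simp
      refine ⟨⟨a + 1, by simp, by simp [List.getD_eq_getElem?_getD], Or.inr a.succ_ne_zero⟩, ?_⟩
      rw [deleteB_replicate_succ_append_singleton hs, List.toFinset_cons,
        Finset.erase_insert (by simpa using hsw)]
      exact ih hw (by simpa using hlen)

def twoBlockDivision (a : ℕ) (B₁ B₂ : Finset ℕ) (b : ℕ) : List (Finset ℕ) :=
  List.replicate a ∅ ++ B₁ :: B₂ :: List.replicate b ∅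

section TwoBlockDivision

variable {B₁ B₂ : Finset ℕ} {s : ℕ}

lemma admissibleB_twoBlockDivision_of_mem_right (hs : s ∈ B₂) (a b : ℕ) :
    AdmissibleB (twoBlockDivision a B₁ B₂ b) s :=
  ⟨a + 1, by simp [twoBlockDivision], by simp [twoBlockDivision, List.getD_eq_getElem?_getD, hs],
    Or.inr a.succ_ne_zero⟩

lemma admissibleB_twoBlockDivision_succ_of_mem_left (hs : s ∈ B₁) (a b : ℕ) :
    AdmissibleB (twoBlockDivision (a + 1) B₁ B₂ b) s :=
  ⟨a + 1, by simp [twoBlockDivision], by simp [twoBlockDivision, List.getD_eq_getElem?_getD, hs],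
    Or.inr a.succ_ne_zero⟩

lemma deleteB_twoBlockDivision_zero_of_mem_left (hs : s ∈ B₁) (b : ℕ) :
    deleteB (twoBlockDivision 0 B₁ B₂ b) s =
      (B₁.filter (s < ·) ∪ B₂) :: List.replicate b ∅ := by
  simp [deleteB, deleteA, twoBlockDivision, List.findIdx_cons, hs]

lemma deleteB_twoBlockDivision_succ_of_mem_left (hs : s ∈ B₁) (a b : ℕ) :
    deleteB (twoBlockDivision (a + 1) B₁ B₂ b) s =
      twoBlockDivision a (B₁.filter (· < s)) (B₁.filter (s < ·) ∪ B₂) b := by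
  simp [deleteB, deleteA, twoBlockDivision, List.findIdx_cons, hs, findIdx_replicate_empty_append,
    List.replicate_succ', Nat.add_assoc, List.drop_append]
  omega

lemma deleteB_twoBlockDivision_of_mem_right_zero (hs₁ : s ∉ B₁) (hs₂ : s ∈ B₂) (a : ℕ) :
    deleteB (twoBlockDivision a B₁ B₂ 0) s = List.replicate a ∅ ++ [B₁ ∪ B₂.erase s] := by
  simp [deleteB, twoBlockDivision, List.findIdx_cons, hs₁, hs₂, findIdx_replicate_empty_append]

lemma deleteB_twoBlockDivision_of_mem_right_succ (hs₁ : s ∉ B₁) (hs₂ : s ∈ B₂) (a b : ℕ) :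
    deleteB (twoBlockDivision a B₁ B₂ (b + 1)) s =
      twoBlockDivision a (B₁ ∪ B₂.filter (· < s)) (B₂.filter (s < ·)) b := by
  simp [deleteB, deleteA, twoBlockDivision, List.findIdx_cons, hs₁, hs₂,
    findIdx_replicate_empty_append, Nat.add_assoc, List.drop_append]
  omega

end TwoBlockDivision

section Split

variable {B₁ B₂ T : Finset ℕ} {s : ℕ}

lemma filter_lt_union_filter_gt (hs : s ∉ T) : T.filter (· < s) ∪ T.filter (s < ·) = T := by
  ext t
  simp only [Finset.mem_union, Finset.mem_filter]
  have : t ∈ T → t ≠ s := fun ht h => hs (h ▸ ht)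
  grind

lemma filter_lt_filter_gt_of_mem_left (hB : ∀ x ∈ B₁, ∀ y ∈ B₂, x < y)
    (hS : insert s T = B₁ ∪ B₂) (hs : s ∈ B₁) :
    B₁.filter (· < s) = T.filter (· < s) ∧ B₁.filter (s < ·) ∪ B₂ = T.filter (s < ·) := by
  have hmem : ∀ t, t = s ∨ t ∈ T ↔ t ∈ B₁ ∨ t ∈ B₂ := fun t => by
    simpa using congrArg (t ∈ ·) hS
  constructor <;> ext t <;> simp only [Finset.mem_union, Finset.mem_filter] <;> grind

lemma filter_lt_filter_gt_of_mem_right (hB : ∀ x ∈ B₁, ∀ y ∈ B₂, x < y)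
    (hS : insert s T = B₁ ∪ B₂) (hs : s ∈ B₂) :
    B₁ ∪ B₂.filter (· < s) = T.filter (· < s) ∧ B₂.filter (s < ·) = T.filter (s < ·) := by
  have hmem : ∀ t, t = s ∨ t ∈ T ↔ t ∈ B₁ ∨ t ∈ B₂ := fun t => by
    simpa using congrArg (t ∈ ·) hS
  constructor <;> ext t <;> simp only [Finset.mem_union, Finset.mem_filter] <;> grind

end Split

lemma isCPermB_twoBlockDivision_zero_cons_iff {B₁ B₂ : Finset ℕ} {s : ℕ} {w : List ℕ}
    (hw : (s :: w).Nodup) (hB : ∀ x ∈ B₁, ∀ y ∈ B₂, x < y)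
    (hS : (s :: w).toFinset = B₁ ∪ B₂) (hs : s ∈ B₁) {b : ℕ} (hlen : w.length = b + 1) :
    IsCPermB (twoBlockDivision 0 B₁ B₂ b) (s :: w) ↔ listDescents (s :: w) = 0 := by
  obtain ⟨hsw, hw⟩ := List.nodup_cons.1 hw
  rw [List.toFinset_cons] at hS
  have hmem : ∀ t, t = s ∨ t ∈ w ↔ t ∈ B₁ ∨ t ∈ B₂ := fun t => by
    simpa using congrArg (t ∈ ·) hS
  have hmin_iff : (∀ t ∈ B₁, s ≤ t) ↔ ∀ t ∈ w, s ≤ t := by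
    constructor
    · intro hmin t ht
      rcases (hmem t).1 (Or.inr ht) with h | h
      exacts [hmin t h, (hB s hs t h).le]
    · intro hmin t ht
      rcases (hmem t).2 (Or.inl ht) with rfl | h
      exacts [le_rfl, hmin t h]
  rw [isCPermB_cons_iff, deleteB_twoBlockDivision_zero_of_mem_left hs, twoBlockDivision,
    List.replicate_zero, List.nil_append,
    admissibleB_cons_iff hs (by simpa using fun h => lt_irrefl s (hB s hs s h)), hmin_iff,
    listDescents_cons_eq_zero_iff]
  refine and_congr_right fun hmin => ?_
  have hT : B₁.filter (s < ·) ∪ B₂ = w.toFinset := by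
    rw [(filter_lt_filter_gt_of_mem_left hB hS hs).2]
    refine Finset.filter_true_of_mem fun t ht => ?_
    rw [List.mem_toFinset] at ht
    exact lt_of_le_of_ne (hmin t ht) (by rintro rfl; exact hsw ht)
  rw [hT, isCPermB_cons_replicate_iff hw hlen]

theorem isCPermB_twoBlockDivision_iff {w : List ℕ} (hw : w.Nodup) {B₁ B₂ : Finset ℕ}
    (hB : ∀ x ∈ B₁, ∀ y ∈ B₂, x < y) (hS : w.toFinset = B₁ ∪ B₂) {a b : ℕ}
    (hlen : w.length = a + b + 2) :
    IsCPermB (twoBlockDivision a B₁ B₂ b) w ↔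
      listDescents w + (if w.headI ∈ B₁ then 1 else 0) ≤ a + 1 := by
  induction w generalizing B₁ B₂ a b with
  | nil => simp at hlen
  | cons s w ih =>
    obtain ⟨hsw, hw'⟩ := List.nodup_cons.1 hw
    obtain ⟨x, xs, rfl⟩ := List.exists_cons_of_ne_nil (show w ≠ [] by rintro rfl; simp at hlen)
    simp only [List.length_cons] at hlen
    set T := (x :: xs).toFinset
    have hsT : s ∉ T := by simpa [T] using hsw
    have hS' : insert s T = B₁ ∪ B₂ := by rw [← hS, List.toFinset_cons]
    have hsplit : ∀ a b, xs.length + 1 = a + b + 2 →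
        (IsCPermB (twoBlockDivision a (T.filter (· < s)) (T.filter (s < ·)) b) (x :: xs) ↔
          listDescents (s :: x :: xs) ≤ a + 1) := by
      intro a b h
      have hsep : ∀ y ∈ T.filter (· < s), ∀ z ∈ T.filter (s < ·), y < z := fun y hy z hz =>
        (Finset.mem_filter.1 hy).2.trans (Finset.mem_filter.1 hz).2
      rw [ih hw' hsep (filter_lt_union_filter_gt hsT).symm (by simpa using h),
        listDescents_cons_cons]
      simp [T]
    rw [List.headI_cons]
    rcases Finset.mem_union.1 (hS' ▸ Finset.mem_insert_self s T) with hs₁ | hs₂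
    · rw [if_pos hs₁]
      cases a with
      | zero =>
        rw [isCPermB_twoBlockDivision_zero_cons_iff hw hB hS hs₁ (by simp; omega)]
        omega
      | succ a =>
        obtain ⟨hlo, hhi⟩ := filter_lt_filter_gt_of_mem_left hB hS' hs₁
        rw [isCPermB_cons_iff, deleteB_twoBlockDivision_succ_of_mem_left hs₁, hlo, hhi,
          hsplit a b (by omega)]
        simp only [admissibleB_twoBlockDivision_succ_of_mem_left hs₁, true_and]
        omega
    · have hs₁ : s ∉ B₁ := fun h => lt_irrefl s (hB s h s hs₂)
      rw [if_neg hs₁, isCPermB_cons_iff]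
      simp only [admissibleB_twoBlockDivision_of_mem_right hs₂, true_and, add_zero]
      cases b with
      | zero =>
        have hT : B₁ ∪ B₂.erase s = T := by
          rw [← Finset.erase_insert hsT, hS', Finset.erase_union_distrib,
            Finset.erase_eq_of_notMem hs₁]
        rw [deleteB_twoBlockDivision_of_mem_right_zero hs₁ hs₂, hT]
        refine iff_of_true (isCPermB_replicate_append_toFinset hw' (by simp; omega)) ?_
        have := listDescents_add_one_le_length (List.cons_ne_nil s (x :: xs))
        simp only [List.length_cons] at this
        omega
      | succ b =>
        obtain ⟨hlo, hhi⟩ := filter_lt_filter_gt_of_mem_right hB hS' hs₂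
        rw [deleteB_twoBlockDivision_of_mem_right_succ hs₁ hs₂, hlo, hhi,
          hsplit a b (by omega)]

/-- for the division of `{1,…,n}` with all elements in position `k`,
a permutation is a type B `C`-permutation iff it has at most `k-1` descents. -/
theorem cpermB_descents (n k : ℕ) (h1 : 1 ≤ k) (h2 : k ≤ n) :
    ∀ w : List ℕ, w.Perm (List.range' 1 n) →
      (IsCPermB (midDivision n k) w ↔ listDescents w ≤ k - 1) := by
  intro w hp
  have hw : w.Nodup := hp.nodup_iff.2 List.nodup_range'
  have hlen : w.length = n := by rw [hp.length_eq, List.length_range']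
  have hS : w.toFinset = Finset.Icc 1 n := by
    ext t
    simp [hp.mem_iff, List.mem_range'_1]
    omega
  obtain rfl | ⟨j, rfl⟩ : k = 1 ∨ ∃ j, k = j + 2 := by
    rcases k with _ | _ | j
    exacts [absurd h1 (by omega), Or.inl rfl, Or.inr ⟨j, rfl⟩]
  · have hmid : midDivision n 1 = w.toFinset :: List.replicate (n - 1) ∅ := by
      simp [midDivision, hS]
    rw [hmid, isCPermB_cons_replicate_iff hw (by omega)]
    omega
  · have hmid : midDivision n (j + 2) = twoBlockDivision j ∅ w.toFinset (n - (j + 2)) := by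
      simp [midDivision, twoBlockDivision, hS, List.replicate_succ']
    rw [hmid, isCPermB_twoBlockDivision_iff hw (by simp) (by simp) (by omega)]
    simp

end MixedEulerian
end
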